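/- For all real q ≥ 2 and all integers n ≥ 1 and m ≥ 1, one has ∑_{k=1}^{n−1} (k^m/q^k)·(1/(1 − k/n)) ≤ 3^{m+3}·m!/q. -/

import Mathlib

/-!
Since `k ≤ n - 1`, the factor `1 / (1 - k / n) = n / (n - k)` is at most `k + 1`, and for `q ≥ 2`,
`q ^ k ≥ q · 2 ^ (k - 1)`. Each term is therefore at most `(2 / q) · (k + 1) ^ (m + 1) / 2 ^ k`,
and `(k + 1) ^ (m + 1) ≤ (m + 1)! · C(k + m + 1, m + 1)`, whose generating series at `1 / 2`
sums to `(m + 1)! · 2 ^ (m + 2)`. It remains to check `(m + 1) · 2 ^ (m + 3) ≤ 3 ^ (m + 3)`.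
-/

open Finset Nat

lemma one_div_one_sub_div_le_add_one {x y : ℝ} (hx : 0 ≤ x) (hxy : x + 1 ≤ y) :
    1 / (1 - x / y) ≤ x + 1 := by
  rw [one_sub_div (by linarith), one_div_div, div_le_iff₀ (by linarith)]
  nlinarith

lemma one_div_pow_le_of_two_le {q : ℝ} (hq : 2 ≤ q) {k : ℕ} (hk : 1 ≤ k) :
    1 / q ^ k ≤ 2 / q * (1 / 2) ^ k := by
  obtain ⟨j, rfl⟩ := Nat.exists_eq_add_of_le' hk
  calc 1 / q ^ (j + 1) = 1 / q * (1 / q) ^ j := by ring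
    _ ≤ 1 / q * (1 / 2) ^ j := by gcongr
    _ = 2 / q * (1 / 2) ^ (j + 1) := by ring

lemma Nat.pow_le_add_descFactorial (k m : ℕ) : (k + 1) ^ m ≤ (k + m).descFactorial m := by
  rw [add_descFactorial_eq_ascFactorial]
  exact pow_succ_le_ascFactorial (k + 1) m

lemma sum_descFactorial_mul_geometric_le {r : ℝ} (hr₀ : 0 ≤ r) (hr₁ : r < 1) (s : Finset ℕ)
    (j : ℕ) : ∑ k ∈ s, ((k + j).descFactorial j : ℝ) * r ^ k ≤ j ! / (1 - r) ^ (j + 1) := by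
  have hr : ‖r‖ < 1 := by rwa [Real.norm_of_nonneg hr₀]
  calc ∑ k ∈ s, ((k + j).descFactorial j : ℝ) * r ^ k
      ≤ ∑' k, ((k + j).descFactorial j : ℝ) * r ^ k :=
        (summable_descFactorial_mul_geometric_of_norm_lt_one j hr).sum_le_tsum s
          (fun _ _ ↦ by positivity)
    _ = j ! * ∑' k, ((k + j).choose j : ℝ) * r ^ k := by
        rw [← tsum_mul_left]
        simp only [descFactorial_eq_factorial_mul_choose, cast_mul, mul_assoc]
    _ = j ! / (1 - r) ^ (j + 1) := by
        rw [tsum_choose_mul_geometric_of_norm_lt_one j hr, mul_one_div]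

lemma Nat.add_two_mul_two_pow_le (m : ℕ) : (m + 2) * 2 ^ m ≤ 2 * 3 ^ m := by
  induction m with
  | zero => norm_num
  | succ m ih =>
    calc (m + 1 + 2) * 2 ^ (m + 1) = (2 * (m + 3)) * 2 ^ m := by ring
      _ ≤ (3 * (m + 2)) * 2 ^ m := Nat.mul_le_mul_right _ (by lia)
      _ ≤ 2 * 3 ^ (m + 1) := by rw [pow_succ]; lia

lemma Nat.succ_mul_two_pow_le_three_pow (m : ℕ) : (m + 1) * 2 ^ (m + 3) ≤ 3 ^ (m + 3) :=
  calc (m + 1) * 2 ^ (m + 3) = 8 * ((m + 1) * 2 ^ m) := by ring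
    _ ≤ 8 * (2 * 3 ^ m) :=
        Nat.mul_le_mul_left 8 ((Nat.mul_le_mul_right _ (by lia)).trans (add_two_mul_two_pow_le m))
    _ ≤ 3 ^ (m + 3) := by rw [pow_add]; lia

lemma pow_div_pow_mul_one_div_one_sub_div_le {q : ℝ} (hq : 2 ≤ q) (m : ℕ) {k n : ℕ}
    (hk : 1 ≤ k) (hkn : k + 1 ≤ n) :
    (k : ℝ) ^ m / q ^ k * (1 / (1 - (k : ℝ) / n)) ≤
      2 / q * (((k + (m + 1)).descFactorial (m + 1) : ℝ) * (1 / 2) ^ k) := by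
  have hpow : ((k : ℝ) + 1) ^ (m + 1) ≤ (k + (m + 1)).descFactorial (m + 1) := by
    exact_mod_cast Nat.pow_le_add_descFactorial k (m + 1)
  calc (k : ℝ) ^ m / q ^ k * (1 / (1 - (k : ℝ) / n))
      ≤ (k : ℝ) ^ m / q ^ k * (k + 1) := by
        gcongr
        exact one_div_one_sub_div_le_add_one k.cast_nonneg (by exact_mod_cast hkn)
    _ = (k : ℝ) ^ m * (k + 1) * (1 / q ^ k) := by ring
    _ ≤ (k + 1) ^ (m + 1) * (2 / q * (1 / 2) ^ k) := by
        rw [pow_succ]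
        gcongr
        · linarith
        · exact one_div_pow_le_of_two_le hq hk
    _ ≤ _ := by rw [mul_left_comm]; gcongr

theorem stmt_11_general (q : ℝ) (hq : 2 ≤ q) (n m : ℕ) :
    ∑ k ∈ Finset.Icc 1 (n - 1),
        (k : ℝ) ^ m / q ^ k * (1 / (1 - (k : ℝ) / n)) ≤
      3 ^ (m + 3) * (Nat.factorial m) / q := by
  calc _ ≤ ∑ k ∈ Icc 1 (n - 1), 2 / q * (((k + (m + 1)).descFactorial (m + 1) : ℝ) * (1 / 2) ^ k) :=
        sum_le_sum fun k hk ↦ by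
          obtain ⟨hk1, hkn⟩ := mem_Icc.mp hk
          exact pow_div_pow_mul_one_div_one_sub_div_le hq m hk1 (by lia)
    _ ≤ 2 / q * ((m + 1)! / (1 - 1 / 2) ^ (m + 1 + 1)) := by
        rw [← mul_sum]
        gcongr
        exact sum_descFactorial_mul_geometric_le (by norm_num) (by norm_num) _ _
    _ = ((m + 1) * 2 ^ (m + 3) : ℕ) * m ! / q := by
        rw [factorial_succ, show (1 - 1 / 2 : ℝ) = 2⁻¹ by norm_num, inv_pow, div_inv_eq_mul]
        push_cast
        ring
    _ ≤ 3 ^ (m + 3) * m ! / q := by gcongr; exact_mod_cast succ_mul_two_pow_le_three_pow m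

theorem stmt_11 (q : ℝ) (hq : 2 ≤ q) (n m : ℕ) (hn : 1 ≤ n) (hm : 1 ≤ m) :
    ∑ k ∈ Finset.Icc 1 (n - 1),
        (k : ℝ) ^ m / q ^ k * (1 / (1 - (k : ℝ) / n)) ≤
      3 ^ (m + 3) * (Nat.factorial m) / q :=
  stmt_11_general q hq n m
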